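/- Assume D = 0 and T = 1, fix ρ > 0 and let Ω = { x ∈ ℝ^L : x_i ≥ 0 for all i and ∑_i x_i = ρ·L }. Let a : [0,∞) → ℝ^L be a differentiable solution of a'(t) = f(a(t)) with a(0) ∈ Ω. Then a(t) ∈ Ω for all t > 0, and a(t) converges to the set of critical points in Ω as t → ∞: the distance from a(t) to the set E = { x ∈ Ω : f(x) = 0 } tends to 0 as t → ∞. -/

import Mathlib

open Finset Filter

/-- `auxN G κ a i = κ + ∑_{j ~ i} a_j`. -/
noncomputable def auxN {L : ℕ} (G : SimpleGraph (Fin L)) [DecidableRel G.Adj] (κ : ℝ)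
    (a : Fin L → ℝ) (i : Fin L) : ℝ :=
  κ + ∑ j ∈ G.neighborFinset i, a j

/-- The auxin transport vector field
`f_i(a) = D·∑_{k ~ i}(a_k − a_i) + T·∑_{k ~ i}(a_k·a_i/N_k(a) − a_i·a_k/N_i(a))`. -/
noncomputable def auxF {L : ℕ} (G : SimpleGraph (Fin L)) [DecidableRel G.Adj] (κ D T : ℝ)
    (a : Fin L → ℝ) (i : Fin L) : ℝ :=
  D * ∑ k ∈ G.neighborFinset i, (a k - a i) +
    T * ∑ k ∈ G.neighborFinset i,
      (a k * a i / auxN G κ a k - a i * a k / auxN G κ a i)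

/-!
Write `f_i(x) = x_i g_i(x)`, where `g` is continuous near the nonnegative orthant. A coordinate
that vanishes stays zero by Grönwall, so the orthant is forward invariant; `∑ f_i = 0` by the
symmetry of the adjacency relation, so `Ω` is invariant. Along solutions the quadratic form
`Q(x) = ∑_{i ~ k} x_i x_k` grows at the rate `Φ(x) = ∑_{i ~ k} x_i x_k (N_i - N_k)² / (N_i N_k)`,
which is nonnegative and vanishes only where `f` does. As `Q` is bounded on the compact set `Ω`
and `t ↦ Φ(a(t))` is uniformly continuous, Barbalat's argument gives `Φ(a(t)) → 0`, and
compactness of `Ω` turns this into convergence to the critical set.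
-/

open Set Metric Topology

theorem nonneg_of_hasDerivAt_eq_mul {y c : ℝ → ℝ} {t₀ t₁ K : ℝ}
    (hy : ∀ t ∈ Icc t₀ t₁, HasDerivAt y (y t * c t) t)
    (hc : ∀ t ∈ Icc t₀ t₁, |c t| ≤ K)
    (h₀ : 0 ≤ y t₀) : ∀ t ∈ Icc t₀ t₁, 0 ≤ y t := by
  intro t ht
  by_contra! hneg
  have hcont : ContinuousOn y (Icc t₀ t) := fun s hs =>
    (hy s ⟨hs.1, hs.2.trans ht.2⟩).continuousAt.continuousWithinAt
  obtain ⟨σ, hσ, hσ0⟩ := intermediate_value_Icc' ht.1 hcont ⟨hneg.le, h₀⟩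
  refine hneg.ne (eq_zero_of_abs_deriv_le_mul_abs_self_of_eq_zero_right (K := K)
    (hcont.mono (Icc_subset_Icc_left hσ.1))
    (fun s hs => (hy s ⟨hσ.1.trans hs.1, hs.2.le.trans ht.2⟩).hasDerivWithinAt) hσ0
    (fun s hs => ?_) t ⟨hσ.2, le_rfl⟩)
  rw [Real.norm_eq_abs, Real.norm_eq_abs, abs_mul, mul_comm K]
  exact mul_le_mul_of_nonneg_left (hc s ⟨hσ.1.trans hs.1, hs.2.le.trans ht.2⟩) (abs_nonneg _)

theorem nonneg_of_hasDerivAt_eq_mul_rate {ι : Type*} [Fintype ι] {g : (ι → ℝ) → ι → ℝ}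
    {a : ℝ → ι → ℝ} (hg : ∀ x, 0 ≤ x → ContinuousAt g x)
    (ha : ∀ t, 0 ≤ t → HasDerivAt a (a t * g (a t)) t) (h₀ : 0 ≤ a 0) :
    ∀ t, 0 ≤ t → 0 ≤ a t := by
  intro b hb
  suffices Icc 0 b ⊆ {t | 0 ≤ a t} from this ⟨hb, le_rfl⟩
  refine IsClosed.Icc_subset_of_forall_mem_nhdsWithin ?_ h₀ fun x ⟨hx, hxb⟩ => ?_
  · have : ContinuousOn a (Icc 0 b) := fun t ht => (ha t ht.1).continuousAt.continuousWithinAt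
    rw [inter_comm]
    exact this.preimage_isClosed_of_isClosed isClosed_Icc isClosed_Ici
  · obtain ⟨δ, hδ, hgδ⟩ := Metric.continuousAt_iff.1
      ((hg _ hx).comp (ha x hxb.1).continuousAt) 1 one_pos
    have hbound : ∀ t ∈ Icc x (x + δ / 2), ∀ i, |g (a t) i| ≤ ‖g (a x)‖ + 1 := by
      intro t ht i
      have hdist : dist t x < δ := by
        rw [Real.dist_eq, abs_of_nonneg (by linarith [ht.1])]; linarith [ht.2]
      calc |g (a t) i| ≤ ‖g (a t)‖ := norm_le_pi_norm (g (a t)) i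
        _ ≤ ‖g (a x)‖ + ‖g (a t) - g (a x)‖ := norm_le_insert' _ _
        _ ≤ ‖g (a x)‖ + 1 := by
          rw [← dist_eq_norm]; exact add_le_add_right (hgδ hdist).le _
    refine mem_of_superset (Icc_mem_nhdsGT (by linarith)) fun t ht i =>
      nonneg_of_hasDerivAt_eq_mul (y := fun s => a s i) (c := fun s => g (a s) i)
        (fun s hs => hasDerivAt_pi.1 (ha s (hxb.1.trans hs.1)) i)
        (fun s hs => hbound s hs i) (hx i) t ht

theorem tendsto_zero_of_hasDerivAt_of_bddAbove {V g : ℝ → ℝ}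
    (hV : ∀ t, 0 ≤ t → HasDerivAt V (g t) t) (hg : ∀ t, 0 ≤ t → 0 ≤ g t)
    (hgu : UniformContinuousOn g (Ici 0)) (hVb : BddAbove (V '' Ici 0)) :
    Tendsto g atTop (𝓝 0) := by
  have hmono : MonotoneOn V (Ici 0) :=
    monotoneOn_of_hasDerivWithinAt_nonneg (convex_Ici 0)
      (fun t ht => (hV t ht).continuousAt.continuousWithinAt)
      (fun t ht => (hV t (interior_subset ht)).hasDerivWithinAt)
      (fun t ht => hg t (interior_subset ht))
  rw [Metric.tendsto_atTop]
  intro ε hε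
  obtain ⟨δ, hδ, hgδ⟩ := Metric.uniformContinuousOn_iff.1 hgu (ε / 2) (half_pos hε)
  obtain ⟨_, ⟨t₀, ht₀, rfl⟩, hV₀⟩ := exists_lt_of_lt_csSup (Set.nonempty_Ici.image V)
    (sub_lt_self (sSup (V '' Ici 0)) (by positivity : 0 < ε * δ / 4))
  refine ⟨t₀, fun t ht => ?_⟩
  have ht0 : 0 ≤ t := le_trans ht₀ ht
  have hinc : V (t + δ / 2) - V t < ε * δ / 4 := by
    have h1 : V (t + δ / 2) ≤ sSup (V '' Ici 0) :=
      le_csSup hVb (mem_image_of_mem V (show (0:ℝ) ≤ t + δ / 2 by positivity))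
    have h2 : V t₀ ≤ V t := hmono ht₀ ht0 ht
    linarith
  obtain ⟨ξ, hξ, hslope⟩ := exists_hasDerivAt_eq_slope V g (by linarith : t < t + δ / 2)
    (fun s hs => (hV s (ht0.trans hs.1)).continuousAt.continuousWithinAt)
    (fun s hs => hV s (ht0.trans hs.1.le))
  have hξ_small : g ξ < ε / 2 := by
    rw [hslope, div_lt_iff₀ (by linarith)]
    linarith
  have hdist : dist t ξ < δ := by
    rw [dist_comm, Real.dist_eq, abs_of_pos (by linarith [hξ.1])]
    linarith [hξ.2]
  have hclose := hgδ t ht0 ξ (ht0.trans hξ.1.le) hdist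
  rw [Real.dist_eq] at hclose ⊢
  rw [sub_zero, abs_of_nonneg (hg t ht0)]
  linarith [(abs_sub_lt_iff.1 hclose).1]

theorem tendsto_infDist_of_tendsto_zero {α E : Type*} [PseudoMetricSpace E] {l : Filter α}
    {K Z : Set E} (hK : IsCompact K) {Φ : E → ℝ} (hΦ : ContinuousOn Φ K)
    (hZ : ∀ x ∈ K, Φ x = 0 → x ∈ Z) {u : α → E} (hu : ∀ᶠ n in l, u n ∈ K)
    (hΦu : Tendsto (fun n => Φ (u n)) l (𝓝 0)) :
    Tendsto (fun n => infDist (u n) Z) l (𝓝 0) := by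
  refine Metric.tendsto_nhds.2 fun ε hε => ?_
  have hfar : IsCompact (K ∩ {x | ε ≤ infDist x Z}) :=
    hK.inter_right (isClosed_le continuous_const (continuous_infDist_pt Z))
  obtain ⟨δ, hδ, hΦδ⟩ := hfar.exists_forall_le' (hΦ.abs.mono inter_subset_left) (a := 0)
    fun x ⟨hxK, (hxε : ε ≤ infDist x Z)⟩ => abs_pos.2 fun hx0 => by
      rw [infDist_zero_of_mem (hZ x hxK hx0)] at hxε
      exact hxε.not_gt hε
  filter_upwards [hu, Metric.tendsto_nhds.1 hΦu δ hδ] with n hnK hnΦ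
  rw [Real.dist_eq, sub_zero, abs_of_nonneg infDist_nonneg]
  rw [Real.dist_eq, sub_zero] at hnΦ
  by_contra! hn
  exact (hΦδ (u n) ⟨hnK, hn⟩).not_gt hnΦ

theorem SimpleGraph.sum_sum_neighborFinset_swap {V M : Type*} [Fintype V] [AddCommMonoid M]
    (G : SimpleGraph V) [DecidableRel G.Adj] (F : V → V → M) :
    ∑ i, ∑ k ∈ G.neighborFinset i, F i k = ∑ i, ∑ k ∈ G.neighborFinset i, F k i := by
  simp only [SimpleGraph.neighborFinset_eq_filter, sum_filter]
  rw [sum_comm]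
  exact sum_congr rfl fun i _ => sum_congr rfl fun k _ => if_congr (G.adj_comm k i) rfl rfl

def scaledSimplex (ι : Type*) [Fintype ι] (s : ℝ) : Set (ι → ℝ) :=
  {x | (∀ i, 0 ≤ x i) ∧ ∑ i, x i = s}

theorem isCompact_scaledSimplex (ι : Type*) [Fintype ι] (s : ℝ) :
    IsCompact (scaledSimplex ι s) := by
  refine (isCompact_Icc (a := (0 : ι → ℝ)) (b := fun _ => s)).of_isClosed_subset ?_ fun x hx =>
    ⟨fun i => hx.1 i, fun i => hx.2 ▸ single_le_sum (fun j _ => hx.1 j) (mem_univ i)⟩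
  exact isClosed_Ici.inter (isClosed_eq (by fun_prop) continuous_const)

section Auxin

variable {L : ℕ} (G : SimpleGraph (Fin L)) [DecidableRel G.Adj] (κ : ℝ)

noncomputable def auxRate (x : Fin L → ℝ) (i : Fin L) : ℝ :=
  ∑ k ∈ G.neighborFinset i, (x k / auxN G κ x k - x k / auxN G κ x i)

noncomputable def auxDissipation (x : Fin L → ℝ) : ℝ :=
  ∑ i, ∑ k ∈ G.neighborFinset i,
    x i * x k * (auxN G κ x i - auxN G κ x k) ^ 2 / (auxN G κ x i * auxN G κ x k)

def auxLyapunov (x : Fin L → ℝ) : ℝ :=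
  ∑ i, x i * ∑ j ∈ G.neighborFinset i, x j

theorem auxF_eq_mul_auxRate (x : Fin L → ℝ) : auxF G κ 0 1 x = x * auxRate G κ x := by
  ext i
  simp only [auxF, auxRate, Pi.mul_apply, zero_mul, one_mul, zero_add]
  rw [mul_sum]
  exact sum_congr rfl fun k _ => by ring

theorem sum_auxF (x : Fin L → ℝ) : ∑ i, auxF G κ 0 1 x i = 0 := by
  simp only [auxF, zero_mul, one_mul, zero_add, sum_sub_distrib]
  rw [sub_eq_zero, G.sum_sum_neighborFinset_swap]

variable {κ}

theorem auxN_pos (hκ : 0 < κ) {x : Fin L → ℝ} (hx : 0 ≤ x) (i : Fin L) :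
    0 < auxN G κ x i :=
  add_pos_of_pos_of_nonneg hκ (sum_nonneg fun j _ => hx j)

theorem continuous_auxN (i : Fin L) : Continuous fun x : Fin L → ℝ => auxN G κ x i := by
  unfold auxN; fun_prop

theorem continuousAt_auxRate (hκ : 0 < κ) {x : Fin L → ℝ} (hx : 0 ≤ x) :
    ContinuousAt (auxRate G κ) x := by
  have hN := continuous_auxN G (κ := κ)
  refine continuousAt_pi.2 fun i => ?_
  unfold auxRate
  fun_prop (disch := exact (auxN_pos G hκ hx _).ne')

theorem continuousAt_auxF (hκ : 0 < κ) {x : Fin L → ℝ} (hx : 0 ≤ x) :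
    ContinuousAt (auxF G κ 0 1) x := by
  rw [funext (auxF_eq_mul_auxRate G κ)]
  exact continuousAt_id.mul (continuousAt_auxRate G hκ hx)

theorem continuousOn_auxDissipation (hκ : 0 < κ) :
    ContinuousOn (auxDissipation G κ) {x | 0 ≤ x} := by
  refine continuousOn_finsetSum _ fun i _ => continuousOn_finsetSum _ fun k _ => ?_
  have hN := continuous_auxN G (κ := κ)
  refine ContinuousOn.div (by fun_prop) (by fun_prop) fun x hx => ?_
  exact (mul_pos (auxN_pos G hκ hx i) (auxN_pos G hκ hx k)).ne'

theorem continuous_auxLyapunov : Continuous (auxLyapunov G) := by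
  unfold auxLyapunov; fun_prop

theorem auxin_mem_scaledSimplex (hκ : 0 < κ) {a : ℝ → Fin L → ℝ} {s : ℝ}
    (hderiv : ∀ t, 0 ≤ t → HasDerivAt a (auxF G κ 0 1 (a t)) t)
    (h₀ : a 0 ∈ scaledSimplex (Fin L) s) (t : ℝ) (ht : 0 ≤ t) :
    a t ∈ scaledSimplex (Fin L) s := by
  refine ⟨nonneg_of_hasDerivAt_eq_mul_rate (fun x hx => continuousAt_auxRate G hκ hx)
    (fun t ht => auxF_eq_mul_auxRate G κ (a t) ▸ hderiv t ht) h₀.1 t ht, ?_⟩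
  have hsum : ∀ t, 0 ≤ t → HasDerivAt (fun t => ∑ i, a t i) 0 t := fun t ht => by
    simpa only [sum_auxF] using
      HasDerivAt.fun_sum (u := univ) fun i _ => hasDerivAt_pi.1 (hderiv t ht) i
  exact (constant_of_has_deriv_right_zero (f := fun t => ∑ i, a t i)
    (fun u hu => (hsum u hu.1).continuousAt.continuousWithinAt)
    (fun u hu => (hsum u hu.1).hasDerivWithinAt) t ⟨ht, le_rfl⟩).trans h₀.2

theorem hasDerivAt_auxLyapunov {a : ℝ → Fin L → ℝ} {v : Fin L → ℝ} {t : ℝ}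
    (ha : HasDerivAt a v t) :
    HasDerivAt (fun s => auxLyapunov G (a s))
      (2 * ∑ i, v i * ∑ j ∈ G.neighborFinset i, a t j) t := by
  have hcoord := hasDerivAt_pi.1 ha
  refine (HasDerivAt.fun_sum (u := univ) fun i _ =>
    (hcoord i).mul (HasDerivAt.fun_sum fun j _ => hcoord j)).congr_deriv ?_
  rw [sum_add_distrib, two_mul]
  congr 1
  simp only [mul_sum]
  rw [G.sum_sum_neighborFinset_swap]
  exact sum_congr rfl fun i _ => sum_congr rfl fun j _ => mul_comm _ _

theorem two_mul_sum_auxF_mul_eq_auxDissipation {x : Fin L → ℝ}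
    (hN : ∀ i, auxN G κ x i ≠ 0) :
    2 * ∑ i, auxF G κ 0 1 x i * ∑ j ∈ G.neighborFinset i, x j = auxDissipation G κ x := by
  have hneighbors : ∀ i, auxF G κ 0 1 x i * ∑ j ∈ G.neighborFinset i, x j
      = auxF G κ 0 1 x i * auxN G κ x i - κ * auxF G κ 0 1 x i := fun i => by
    rw [auxN]; ring
  have hterm : ∀ i, auxF G κ 0 1 x i * auxN G κ x i
      = ∑ k ∈ G.neighborFinset i, x i * x k * (auxN G κ x i / auxN G κ x k - 1) := fun i => by
    simp only [auxF, zero_mul, one_mul, zero_add, sum_mul]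
    exact sum_congr rfl fun k _ => by field_simp [hN i, hN k]
  simp only [hneighbors, sum_sub_distrib, ← mul_sum, sum_auxF, mul_zero, sub_zero, hterm]
  rw [two_mul]
  nth_rewrite 2 [G.sum_sum_neighborFinset_swap]
  rw [← sum_add_distrib]
  refine sum_congr rfl fun i _ => ?_
  rw [← sum_add_distrib]
  exact sum_congr rfl fun k _ => by field_simp [hN i, hN k]; ring

theorem auxDissipation_summand_nonneg (hκ : 0 < κ) {x : Fin L → ℝ} (hx : 0 ≤ x)
    (i k : Fin L) :
    0 ≤ x i * x k * (auxN G κ x i - auxN G κ x k) ^ 2 / (auxN G κ x i * auxN G κ x k) :=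
  div_nonneg (mul_nonneg (mul_nonneg (hx i) (hx k)) (sq_nonneg _))
    (mul_pos (auxN_pos G hκ hx i) (auxN_pos G hκ hx k)).le

theorem auxDissipation_nonneg (hκ : 0 < κ) {x : Fin L → ℝ} (hx : 0 ≤ x) :
    0 ≤ auxDissipation G κ x :=
  sum_nonneg fun i _ => sum_nonneg fun k _ => auxDissipation_summand_nonneg G hκ hx i k

theorem auxF_eq_zero_of_auxDissipation_eq_zero (hκ : 0 < κ) {x : Fin L → ℝ} (hx : 0 ≤ x)
    (h : auxDissipation G κ x = 0) : auxF G κ 0 1 x = 0 := by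
  have hN := auxN_pos G hκ hx
  funext i
  have hrow := (sum_eq_zero_iff_of_nonneg fun i _ =>
    sum_nonneg fun k _ => auxDissipation_summand_nonneg G hκ hx i k).1 h i (mem_univ i)
  have hsummand := (sum_eq_zero_iff_of_nonneg fun k _ =>
    auxDissipation_summand_nonneg G hκ hx i k).1 hrow
  simp only [auxF, zero_mul, one_mul, zero_add, Pi.zero_apply]
  refine sum_eq_zero fun k hk => ?_
  have hik := hsummand k hk
  rw [div_eq_zero_iff, or_iff_left (mul_pos (hN i) (hN k)).ne', mul_eq_zero,
    pow_eq_zero_iff two_ne_zero, sub_eq_zero] at hik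
  rcases hik with hmass | hN_eq
  · calc x k * x i / auxN G κ x k - x i * x k / auxN G κ x i
        = x i * x k * (1 / auxN G κ x k - 1 / auxN G κ x i) := by ring
      _ = 0 := by rw [hmass, zero_mul]
  · rw [hN_eq]; ring

end Auxin

theorem auxin_converges_to_critical_set_general {L : ℕ} (G : SimpleGraph (Fin L))
    [DecidableRel G.Adj] (κ : ℝ) (hκ : 0 < κ) (ρ : ℝ)
    (a : ℝ → Fin L → ℝ)
    (hderiv : ∀ t, 0 ≤ t → HasDerivAt a (auxF G κ 0 1 (a t)) t)
    (h0 : (∀ i, 0 ≤ a 0 i) ∧ ∑ i, a 0 i = ρ * L) :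
    (∀ t, 0 < t → (∀ i, 0 ≤ a t i) ∧ ∑ i, a t i = ρ * L) ∧
    Filter.Tendsto
      (fun t => Metric.infDist (a t)
        {x : Fin L → ℝ |
          ((∀ i, 0 ≤ x i) ∧ ∑ i, x i = ρ * L) ∧ ∀ i, auxF G κ 0 1 x i = 0})
      Filter.atTop (nhds 0) := by
  set Ω := scaledSimplex (Fin L) (ρ * L)
  have hΩ : ∀ t, 0 ≤ t → a t ∈ Ω := auxin_mem_scaledSimplex G hκ hderiv h0
  refine ⟨fun t ht => hΩ t ht.le, ?_⟩
  have hΩc : IsCompact Ω := isCompact_scaledSimplex (Fin L) (ρ * L)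
  have hΦc : ContinuousOn (auxDissipation G κ) Ω :=
    (continuousOn_auxDissipation G hκ).mono fun x hx => hx.1
  obtain ⟨C, hC⟩ := hΩc.bddAbove_image (continuous_nnnorm.comp_continuousOn
    (fun x hx => (continuousAt_auxF G hκ hx.1).continuousWithinAt))
  have hlip : LipschitzOnWith C a (Ici 0) :=
    (convex_Ici 0).lipschitzOnWith_of_nnnorm_hasDerivWithin_le
      (fun t ht => (hderiv t ht).hasDerivWithinAt) fun t ht => hC ⟨a t, hΩ t ht, rfl⟩
  have hΦ : Tendsto (fun t => auxDissipation G κ (a t)) atTop (𝓝 0) :=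
    tendsto_zero_of_hasDerivAt_of_bddAbove (V := fun t => auxLyapunov G (a t))
      (fun t ht => (hasDerivAt_auxLyapunov G (hderiv t ht)).congr_deriv
        (two_mul_sum_auxF_mul_eq_auxDissipation G fun i => (auxN_pos G hκ (hΩ t ht).1 i).ne'))
      (fun t ht => auxDissipation_nonneg G hκ (hΩ t ht).1)
      ((hΩc.uniformContinuousOn_of_continuous hΦc).comp hlip.uniformContinuousOn hΩ)
      ((hΩc.bddAbove_image (continuous_auxLyapunov G).continuousOn).mono <| by
        rintro _ ⟨t, ht, rfl⟩; exact mem_image_of_mem _ (hΩ t ht))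
  exact tendsto_infDist_of_tendsto_zero hΩc hΦc
    (fun x hx hx0 => show x ∈ {x | x ∈ Ω ∧ ∀ i, auxF G κ 0 1 x i = 0} from
      ⟨hx, congrFun (auxF_eq_zero_of_auxDissipation_eq_zero G hκ hx.1 hx0)⟩)
    ((eventually_ge_atTop 0).mono hΩ) hΦ

/-- For pure transport (`D = 0`, `T = 1`), the simplex
`Ω = {x : x ≥ 0, ∑ x_i = ρL}` is invariant and every solution starting in `Ω` converges to
the set of critical points in `Ω`: the distance to `E = {x ∈ Ω : f(x) = 0}` tends to `0`. -/
theorem auxin_converges_to_critical_set {L : ℕ} (hL : 1 ≤ L) (G : SimpleGraph (Fin L))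
    [DecidableRel G.Adj] (κ : ℝ) (hκ : 0 < κ) (ρ : ℝ) (hρ : 0 < ρ)
    (a : ℝ → Fin L → ℝ)
    (hderiv : ∀ t, 0 ≤ t → HasDerivAt a (auxF G κ 0 1 (a t)) t)
    (h0 : (∀ i, 0 ≤ a 0 i) ∧ ∑ i, a 0 i = ρ * L) :
    (∀ t, 0 < t → (∀ i, 0 ≤ a t i) ∧ ∑ i, a t i = ρ * L) ∧
    Filter.Tendsto
      (fun t => Metric.infDist (a t)
        {x : Fin L → ℝ |
          ((∀ i, 0 ≤ x i) ∧ ∑ i, x i = ρ * L) ∧ ∀ i, auxF G κ 0 1 x i = 0})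
      Filter.atTop (nhds 0) :=
  auxin_converges_to_critical_set_general G κ hκ ρ a hderiv h0
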